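/- For any permutation mass function M on PES(Θ) with |Θ| = N ≥ 1 (M nonnegative, M(∅)=0, summing to 1), the RPS entropy satisfies H_RPS(M) ≤ log(∑_{i=1}^{N} P(N,i)(F(i)-1)), i.e., the maximum RPS entropy is log K(N). -/

import Mathlib

def P (n k : ℕ) : ℕ := n.factorial / (n - k).factorial

def F (i : ℕ) : ℕ := ∑ k ∈ Finset.range (i + 1), P i k

def K (N : ℕ) : ℕ := ∑ i ∈ Finset.Icc 1 N, P N i * (F i - 1)

lemma P_zero (n : ℕ) : P n 0 = 1 := by
  simp [P, Nat.div_self (Nat.factorial_pos n)]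

lemma P_one (n : ℕ) (h : 1 ≤ n) : P n 1 = n := by
  obtain ⟨m, rfl⟩ := Nat.exists_eq_add_of_le h
  rw [Nat.add_comm]
  simp only [P, Nat.add_sub_cancel, Nat.factorial_succ]
  exact Nat.mul_div_cancel _ (Nat.factorial_pos m)

lemma F_ge_two (i : ℕ) (h : 1 ≤ i) : 2 ≤ F i := by
  have hsub : ({0, 1} : Finset ℕ) ⊆ Finset.range (i + 1) := by
    intro x hx
    simp only [Finset.mem_insert, Finset.mem_singleton] at hx
    rcases hx with rfl | rfl <;> simp [Nat.lt_succ_iff] <;> omega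
  have := Finset.sum_le_sum_of_subset (f := P i) hsub
  have h2 : ∑ k ∈ ({0, 1} : Finset ℕ), P i k = 1 + i := by
    rw [Finset.sum_pair (by norm_num), P_zero, P_one i h]
  unfold F
  omega

lemma K_ge_one (N : ℕ) (hN : 1 ≤ N) : 1 ≤ K N := by
  have h1 : (1 : ℕ) ∈ Finset.Icc 1 N := by simp [hN]
  have := Finset.single_le_sum (f := fun i => P N i * (F i - 1))
    (fun i _ => Nat.zero_le _) h1
  have hF : 2 ≤ F 1 := F_ge_two 1 le_rfl
  have hP : P N 1 = N := P_one N hN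
  unfold K
  calc 1 ≤ P N 1 * (F 1 - 1) := by
        rw [hP]
        have := Nat.mul_pos (show 0 < N by omega) (show 0 < F 1 - 1 by omega)
        omega
  _ ≤ _ := this

/-- For any permutation mass function M (nonnegative, summing to 1 over all
permutation events of length 1 ≤ i ≤ N), the RPS entropy is at most
log K(N); i.e. the maximum RPS entropy is log(∑_{i=1}^N P(N,i)(F(i)-1)). -/
theorem RPS_entropy_le_max (N : ℕ) (hN : 1 ≤ N) (M : ℕ → ℕ → ℝ)
    (hM0 : ∀ i j, 0 ≤ M i j)
    (hMsum : ∑ i ∈ Finset.Icc 1 N, ∑ j ∈ Finset.range (P N i), M i j = 1) :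
    -∑ i ∈ Finset.Icc 1 N, ∑ j ∈ Finset.range (P N i),
        M i j * Real.log (M i j / ((F i - 1 : ℕ) : ℝ))
      ≤ Real.log (K N : ℝ) := by
  set Kr : ℝ := (K N : ℝ) with hKr
  have hK1 : (1 : ℝ) ≤ Kr := by rw [hKr]; exact_mod_cast K_ge_one N hN
  have hKpos : 0 < Kr := lt_of_lt_of_le one_pos hK1
  -- pointwise bound
  have key : ∀ i ∈ Finset.Icc 1 N, ∀ j ∈ Finset.range (P N i),
      -(M i j * Real.log (M i j / ((F i - 1 : ℕ) : ℝ)))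
        ≤ M i j * Real.log Kr + ((F i - 1 : ℕ) : ℝ) / Kr - M i j := by
    intro i hi j _
    have hi1 : 1 ≤ i := (Finset.mem_Icc.mp hi).1
    have hc : (0 : ℝ) < ((F i - 1 : ℕ) : ℝ) := by
      have := F_ge_two i hi1
      have : 1 ≤ F i - 1 := by omega
      exact_mod_cast lt_of_lt_of_le one_pos (by exact_mod_cast this)
    set c : ℝ := ((F i - 1 : ℕ) : ℝ)
    rcases eq_or_lt_of_le (hM0 i j) with h0 | hp
    · rw [← h0]
      simp
      positivity
    · have hlog := Real.log_le_sub_one_of_pos (show 0 < c / (M i j * Kr) by positivity)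
      have hmul := mul_le_mul_of_nonneg_left hlog (le_of_lt hp)
      have hrw : M i j * Real.log (c / (M i j * Kr))
          = -(M i j * Real.log (M i j / c)) - M i j * Real.log Kr := by
        rw [Real.log_div (ne_of_gt hc) (by positivity),
            Real.log_mul (ne_of_gt hp) (ne_of_gt hKpos),
            Real.log_div (ne_of_gt hp) (ne_of_gt hc)]
        ring
      have hrw2 : M i j * (c / (M i j * Kr) - 1) = c / Kr - M i j := by
        field_simp
      rw [hrw, hrw2] at hmul
      linarith
  have hc_sum : ∑ i ∈ Finset.Icc 1 N, ∑ j ∈ Finset.range (P N i),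
      (((F i - 1 : ℕ) : ℝ) / Kr) = 1 := by
    have : ∑ i ∈ Finset.Icc 1 N, ∑ j ∈ Finset.range (P N i),
        (((F i - 1 : ℕ) : ℝ) / Kr)
        = (∑ i ∈ Finset.Icc 1 N, ((P N i : ℝ) * ((F i - 1 : ℕ) : ℝ))) / Kr := by
      rw [Finset.sum_div]
      refine Finset.sum_congr rfl fun i _ => ?_
      rw [Finset.sum_const, Finset.card_range]
      push_cast
      ring
    rw [this, div_eq_one_iff_eq (ne_of_gt hKpos)]
    simp only [hKr, K, Nat.cast_sum, Nat.cast_mul]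
  calc -∑ i ∈ Finset.Icc 1 N, ∑ j ∈ Finset.range (P N i),
        M i j * Real.log (M i j / ((F i - 1 : ℕ) : ℝ))
      = ∑ i ∈ Finset.Icc 1 N, ∑ j ∈ Finset.range (P N i),
        -(M i j * Real.log (M i j / ((F i - 1 : ℕ) : ℝ))) := by
        simp [Finset.sum_neg_distrib]
    _ ≤ ∑ i ∈ Finset.Icc 1 N, ∑ j ∈ Finset.range (P N i),
        (M i j * Real.log Kr + ((F i - 1 : ℕ) : ℝ) / Kr - M i j) :=
        Finset.sum_le_sum (fun i hi => Finset.sum_le_sum (key i hi))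
    _ = Real.log Kr := by
        simp only [Finset.sum_sub_distrib, Finset.sum_add_distrib,
          ← Finset.sum_mul]
        rw [hc_sum, hMsum]
        ring
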